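/- Let R be a U_opt-LL eDCTRS over a signature F, and let s, t be terms in T(F,V). If there is an EV-safe reduction sequence s ↪*_{U_opt(R)} t, then there exists an EV-safe reduction sequence s ↪*_{U_opt(R)} t that is EV-instantiated on T(F,V). -/

import Mathlib

set_option maxHeartbeats 1000000

universe u

/-! ## Terms -/

inductive Term (α : Type u) : Type u where
  | var : ℕ → Term α
  | app : α → List (Term α) → Term α

namespace Term

variable {α : Type u}

/-- The list of variable occurrences of a term (left-to-right). -/
def varList : Term α → List ℕ
  | var x => [x]
  | app _ ts => ts.attach.foldr (fun t acc => varList t.1 ++ acc) []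
decreasing_by
  simp only [Term.app.sizeOf_spec]
  have := List.sizeOf_lt_of_mem t.2
  omega

/-- The list of (function symbol, number of arguments) occurrences of a term. -/
def apps : Term α → List (α × ℕ)
  | var _ => []
  | app f ts => (f, ts.length) :: ts.attach.foldr (fun t acc => apps t.1 ++ acc) []
decreasing_by
  simp only [Term.app.sizeOf_spec]
  have := List.sizeOf_lt_of_mem t.2
  omega

/-- `Var(t)`: the set of variables of a term. -/
def varFinset (t : Term α) : Finset ℕ := t.varList.toFinset

/-- All function symbols of the term belong to the signature `F`. -/
def overSig (F : Set α) (t : Term α) : Prop := ∀ p ∈ t.apps, p.1 ∈ F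

/-- `t ∈ T(F,V)`: all function symbols belong to `F` and are applied
according to their arities. -/
def inT (F : Set α) (ar : α → ℕ) (t : Term α) : Prop :=
  ∀ p ∈ t.apps, p.1 ∈ F ∧ ar p.1 = p.2

/-- A term is linear if no variable occurs twice in it. -/
def Linear (t : Term α) : Prop := t.varList.Nodup

/-- A term is ground if it contains no variable. -/
def Ground (t : Term α) : Prop := t.varList = []

/-- Applying a substitution to a term. -/
def subst (σ : ℕ → Term α) : Term α → Term α
  | var x => σ x
  | app f ts => app f (ts.attach.map (fun t => subst σ t.1))
decreasing_by
  simp only [Term.app.sizeOf_spec]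
  have := List.sizeOf_lt_of_mem t.2
  omega

def isVar : Term α → Prop
  | var _ => True
  | app _ _ => False

def root? : Term α → Option α
  | var _ => none
  | app f _ => some f

def args : Term α → List (Term α)
  | var _ => []
  | app _ ts => ts

end Term

def junkPair {α : Type u} : Term α × Term α := (Term.var 0, Term.var 0)

/-! ## Conditional rewrite rules -/

/-- An extended (oriented) conditional rewrite rule `l → r ⇐ s₁ ↠ t₁; …; s_k ↠ t_k`,
where `conds` is the list of pairs `(sᵢ, tᵢ)`. -/
structure ERule (α : Type u) : Type u where
  lhs : Term α
  rhs : Term α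
  conds : List (Term α × Term α)

namespace ERule

variable {α : Type u}

def nonLV (ρ : ERule α) : Prop := ¬ ρ.lhs.isVar
def nonRV (ρ : ERule α) : Prop := ¬ ρ.rhs.isVar

/-- `X_{j+1} = Var(l, t_1, …, t_j)` (0-based index `j`). -/
def Xset (ρ : ERule α) (j : ℕ) : Finset ℕ :=
  ρ.lhs.varFinset ∪ ((ρ.conds.take j).map (fun c => c.2.varFinset)).foldr (· ∪ ·) ∅

/-- `Y_{j+1} = Var(r, t_{j+1}, s_{j+2}, t_{j+2}, …, s_k, t_k)` (0-based index `j`). -/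
def Yset (ρ : ERule α) (j : ℕ) : Finset ℕ :=
  ρ.rhs.varFinset ∪ (ρ.conds.getD j junkPair).2.varFinset ∪
    ((ρ.conds.drop (j+1)).map (fun c => c.1.varFinset ∪ c.2.varFinset)).foldr (· ∪ ·) ∅

/-- `Z_i = X_i ∩ Y_i`. -/
def Zset (ρ : ERule α) (j : ℕ) : Finset ℕ := ρ.Xset j ∩ ρ.Yset j

/-- Determinism: `Var(sᵢ) ⊆ Var(l, t₁, …, t_{i-1})`. -/
def Det (ρ : ERule α) : Prop :=
  ∀ j < ρ.conds.length, (ρ.conds.getD j junkPair).1.varFinset ⊆ ρ.Xset j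

/-- Type 3: `Var(r) ⊆ Var(l, s₁, t₁, …, s_k, t_k)`. -/
def Type3 (ρ : ERule α) : Prop :=
  ρ.rhs.varFinset ⊆
    ρ.lhs.varFinset ∪ ((ρ.conds.map (fun c => c.1.varFinset ∪ c.2.varFinset)).foldr (· ∪ ·) ∅)

/-- Left-linearity of a rule. -/
def LL (ρ : ERule α) : Prop := ρ.lhs.Linear
/-- Right-linearity of a rule. -/
def RL (ρ : ERule α) : Prop := ρ.rhs.Linear
/-- Non-erasingness of a rule: `Var(l) ⊆ Var(r)`. -/
def NE (ρ : ERule α) : Prop := ρ.lhs.varFinset ⊆ ρ.rhs.varFinset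

/-- `EVar(l → r) = Var(r) \\ Var(l)`, the extra variables of a rule. -/
def extraVars (ρ : ERule α) : Finset ℕ := ρ.rhs.varFinset \ ρ.lhs.varFinset

/-- The inverted rule `(l → r ⇐ s₁ ↠ t₁; …; s_k ↠ t_k)⁻¹ = r → l ⇐ t_k ↠ s_k; …; t₁ ↠ s₁`. -/
def inv (ρ : ERule α) : ERule α :=
  ⟨ρ.rhs, ρ.lhs, (ρ.conds.map (fun c => (c.2, c.1))).reverse⟩

def allVarFinset (ρ : ERule α) : Finset ℕ :=
  ρ.lhs.varFinset ∪ ρ.rhs.varFinset ∪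
    ((ρ.conds.map (fun c => c.1.varFinset ∪ c.2.varFinset)).foldr (· ∪ ·) ∅)

/-- A number strictly larger than every variable of the rule; used to pick fresh variables. -/
def freshBase (ρ : ERule α) : ℕ := ρ.allVarFinset.sup id + 1

/-- All terms of the rule use only symbols of `F`. -/
def overSig (F : Set α) (ρ : ERule α) : Prop :=
  ρ.lhs.overSig F ∧ ρ.rhs.overSig F ∧ ∀ c ∈ ρ.conds, c.1.overSig F ∧ c.2.overSig F

/-- All terms of the rule are in `T(F,V)` (symbols of `F`, arity-correct). -/
def inT (F : Set α) (ar : α → ℕ) (ρ : ERule α) : Prop :=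
  ρ.lhs.inT F ar ∧ ρ.rhs.inT F ar ∧ ∀ c ∈ ρ.conds, c.1.inT F ar ∧ c.2.inT F ar

end ERule

/-! ## Reduction relations -/

/-- One-hole contexts. -/
inductive Ctx (α : Type u) : Type u where
  | hole : Ctx α
  | app : α → List (Term α) → Ctx α → List (Term α) → Ctx α

def Ctx.plug {α : Type u} : Ctx α → Term α → Term α
  | .hole, t => t
  | .app f pre c post, t => .app f (pre ++ c.plug t :: post)

/-- The approximations `→_{(n),R}` of the reduction relation of an oriented eCTRS. -/
def RedN {α : Type u} (R : Set (ERule α)) : ℕ → Term α → Term α → Prop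
  | 0 => fun _ _ => False
  | n + 1 => fun s t =>
      RedN R n s t ∨
      ∃ ρ ∈ R, ∃ C : Ctx α, ∃ σ : ℕ → Term α,
        s = C.plug (ρ.lhs.subst σ) ∧ t = C.plug (ρ.rhs.subst σ) ∧
        ∀ c ∈ ρ.conds, Relation.ReflTransGen (RedN R n) (c.1.subst σ) (c.2.subst σ)

/-- The reduction relation `→_R` of an oriented eCTRS. -/
def Red {α : Type u} (R : Set (ERule α)) (s t : Term α) : Prop := ∃ n, RedN R n s t

/-- `→*_R`. -/
def RedStar {α : Type u} (R : Set (ERule α)) : Term α → Term α → Prop :=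
  Relation.ReflTransGen (Red R)

/-- The approximations of the reduction relation of a join CTRS
(conditions interpreted as joinability). -/
def JRedN {α : Type u} (R : Set (ERule α)) : ℕ → Term α → Term α → Prop
  | 0 => fun _ _ => False
  | n + 1 => fun s t =>
      JRedN R n s t ∨
      ∃ ρ ∈ R, ∃ C : Ctx α, ∃ σ : ℕ → Term α,
        s = C.plug (ρ.lhs.subst σ) ∧ t = C.plug (ρ.rhs.subst σ) ∧
        ∀ c ∈ ρ.conds, ∃ w, Relation.ReflTransGen (JRedN R n) (c.1.subst σ) w ∧
          Relation.ReflTransGen (JRedN R n) (c.2.subst σ) w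

/-- The reduction relation of a join CTRS. -/
def JRed {α : Type u} (R : Set (ERule α)) (s t : Term α) : Prop := ∃ n, JRedN R n s t

def JRedStar {α : Type u} (R : Set (ERule α)) : Term α → Term α → Prop :=
  Relation.ReflTransGen (JRed R)

/-- The underlying unconditional system `R_u`. -/
def Ru {α : Type u} (R : Set (ERule α)) : Set (ERule α) :=
  (fun ρ : ERule α => ⟨ρ.lhs, ρ.rhs, []⟩) '' R

/-- Normal form w.r.t. a system. -/
def IsNF {α : Type u} (R : Set (ERule α)) (t : Term α) : Prop := ∀ w, ¬ Red R t w

/-! ## Unravelings for deterministic CTRSs -/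

/-- The fixed-order sequence of a finite set of variables. -/
def seqOf (s : Finset ℕ) : List ℕ := s.sort (· ≤ ·)

/-- `U(t, x⃗)`: a U symbol applied to a term followed by a sequence of variables. -/
def mkU {α : Type u} (f : α) (t : Term α) (xs : List ℕ) : Term α :=
  .app f (t :: xs.map Term.var)

/-- Generic sequential unraveling of a single deterministic rule, where `carry j` is
the variable sequence carried by the `j`-th U symbol. -/
def unravelWith {α : Type u} (carry : ℕ → List ℕ) (u : ℕ → α) (ρ : ERule α) :
    List (ERule α) :=
  (List.range (ρ.conds.length + 1)).map (fun j =>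
    ⟨ if j = 0 then ρ.lhs else mkU (u (j-1)) (ρ.conds.getD (j-1) junkPair).2 (carry (j-1)),
      if j < ρ.conds.length then mkU (u j) (ρ.conds.getD j junkPair).1 (carry j) else ρ.rhs,
      [] ⟩)

/-- Ohlebusch's unraveling `U` of a single rule (carrying `X⃗ᵢ`). -/
def unravelU {α : Type u} (u : ℕ → α) (ρ : ERule α) : List (ERule α) :=
  unravelWith (fun j => seqOf (ρ.Xset j)) u ρ

/-- The optimized unraveling `U_opt` of a single rule (carrying `Z⃗ᵢ`). -/
def unravelOpt {α : Type u} (u : ℕ → α) (ρ : ERule α) : List (ERule α) :=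
  unravelWith (fun j => seqOf (ρ.Zset j)) u ρ

/-- `U(R)`. -/
def USys {α : Type u} (u : ERule α → ℕ → α) (R : Set (ERule α)) : Set (ERule α) :=
  { q | ∃ ρ ∈ R, q ∈ unravelU (u ρ) ρ }

/-- `U_opt(R)`. -/
def UoptSys {α : Type u} (u : ERule α → ℕ → α) (R : Set (ERule α)) : Set (ERule α) :=
  { q | ∃ ρ ∈ R, q ∈ unravelOpt (u ρ) ρ }

/-- The U symbols introduced for the rules of `R`. -/
def USymbols {α : Type u} (u : ERule α → ℕ → α) (R : Set (ERule α)) : Set α :=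
  { a | ∃ ρ ∈ R, ∃ i < ρ.conds.length, a = u ρ i }

/-- Freshness of the U symbols: they do not occur in `F` and are pairwise distinct. -/
def UFresh {α : Type u} (F : Set α) (u : ERule α → ℕ → α) (R : Set (ERule α)) : Prop :=
  (∀ ρ ∈ R, ∀ i < ρ.conds.length, u ρ i ∉ F) ∧
  (∀ ρ ∈ R, ∀ ρ' ∈ R, ∀ i < ρ.conds.length, ∀ j < ρ'.conds.length,
      u ρ i = u ρ' j → ρ = ρ' ∧ i = j)

/-! ## Positions, parallel reduction, EV-safe reduction -/

abbrev Pos := List ℕ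

/-- Subterm at a position. -/
def Term.sub? {α : Type u} : Pos → Term α → Option (Term α)
  | [], t => some t
  | _ :: _, .var _ => none
  | i :: p, .app _ ts => (ts[i]?).bind (Term.sub? p)

/-- Replacing the subterm at a position by `w`. -/
def Term.replaceAt {α : Type u} (w : Term α) : Pos → Term α → Term α
  | [], _ => w
  | _ :: _, .var x => .var x
  | i :: p, .app f ts =>
      .app f (ts.mapIdx (fun j s => if j = i then Term.replaceAt w p s else s))

/-- `Pos_F(t)`: non-variable positions of `t`. -/
def PosF {α : Type u} (t : Term α) : Set Pos :=
  { p | ∃ f ts, Term.sub? p t = some (Term.app f ts) }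

/-- `Pos_V(t)`: variable positions of `t`. -/
def PosV {α : Type u} (t : Term α) : Set Pos :=
  { p | ∃ x, Term.sub? p t = some (Term.var x) }

/-- One rewrite step of an eTRS at position `p`. -/
def RedAt {α : Type u} (R : Set (ERule α)) (p : Pos) (s t : Term α) : Prop :=
  ∃ ρ ∈ R, ρ.conds = [] ∧ ∃ σ : ℕ → Term α,
    Term.sub? p s = some (ρ.lhs.subst σ) ∧ t = Term.replaceAt (ρ.rhs.subst σ) p s

/-- Two positions are parallel. -/
def ParallelPos (p q : Pos) : Prop := ¬ p <+: q ∧ ¬ q <+: p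

/-- A sequence of single steps at the listed positions. -/
inductive RedSeqAt {α : Type u} (R : Set (ERule α)) : List Pos → Term α → Term α → Prop
  | nil (t : Term α) : RedSeqAt R [] t t
  | cons {ps s s' t} (p : Pos) : RedAt R p s s' → RedSeqAt R ps s' t →
      RedSeqAt R (p :: ps) s t

/-- One parallel rewrite step contracting the (pairwise parallel) positions in `P`. -/
def ParStep {α : Type u} (R : Set (ERule α)) (P : List Pos) (s t : Term α) : Prop :=
  P.Pairwise ParallelPos ∧ RedSeqAt R P s t

/-- The parallel reduction `⇉_R`. -/
def ParRed {α : Type u} (R : Set (ERule α)) (s t : Term α) : Prop :=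
  ∃ P, ParStep R P s t

/-- Parallel reduction where every contracted position is at or below a position of `Q`. -/
def ParRedBelow {α : Type u} (R : Set (ERule α)) (Q : Set Pos) (s t : Term α) : Prop :=
  ∃ P, ParStep R P s t ∧ ∀ p ∈ P, ∃ q ∈ Q, q <+: p

/-- `n`-fold composition of a relation. -/
def NFold {β : Type*} (r : β → β → Prop) : ℕ → β → β → Prop
  | 0 => Eq
  | n + 1 => fun a c => ∃ b, r a b ∧ NFold r n b c

/-- The update of the set of basic positions w.r.t. extra variables after a rewrite step
at position `p` with rule `l → r`. -/
def nextB {α : Type u} (B : Set Pos) (p : Pos) (l r : Term α) : Set Pos :=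
  { q | q ∈ B ∧ ¬ p <+: q }
  ∪ { q | ∃ q' ∈ PosF r, q = p ++ q' }
  ∪ { q | ∃ pv p' q', pv ∈ PosV l ∧ Term.sub? pv l = Term.sub? p' r ∧
        (p ++ pv ++ q') ∈ B ∧ q = p ++ p' ++ q' }

/-- Reduction sequences of an eTRS based on a set `B` of positions w.r.t. extra
variables, where additionally every term substituted for an extra variable of the
applied rule satisfies `T` (EV-instantiation on `T`). -/
inductive EVSeq {α : Type u} (R : Set (ERule α)) (T : Term α → Prop) :
    Set Pos → Term α → Term α → Prop
  | refl (B : Set Pos) (t : Term α) : EVSeq R T B t t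
  | step {B : Set Pos} {s s' t : Term α} (p : Pos) (ρ : ERule α) (σ : ℕ → Term α) :
      ρ ∈ R → ρ.conds = [] →
      Term.sub? p s = some (ρ.lhs.subst σ) →
      s' = Term.replaceAt (ρ.rhs.subst σ) p s →
      p ∈ B →
      (∀ x ∈ ρ.extraVars, T (σ x)) →
      EVSeq R T (nextB B p ρ.lhs ρ.rhs) s' t →
      EVSeq R T B s t

/-- An EV-safe reduction sequence `s ↪*_R t`, EV-instantiated on `T`. -/
def EVSafeI {α : Type u} (R : Set (ERule α)) (T : Term α → Prop) (s t : Term α) : Prop :=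
  EVSeq R T (PosF s) s t

/-- An EV-safe reduction sequence `s ↪*_R t`. -/
def EVSafe {α : Type u} (R : Set (ERule α)) (s t : Term α) : Prop :=
  EVSeq R (fun _ => True) (PosF s) s t

/-! ## Tree homomorphisms -/

/-- Applying the tree homomorphism determined by `h` to a term:
`φ(f(t₁, …, t_n)) = h(f){xᵢ ↦ φ(tᵢ)}` (the formal variable `xᵢ` is the variable `i - 1`). -/
def applyHom {α : Type u} (h : α → Term α) : Term α → Term α
  | .var x => .var x
  | .app f ts =>
      Term.subst (fun i => (ts.attach.map (fun s => applyHom h s.1)).getD i (Term.var i)) (h f)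
decreasing_by
  simp only [Term.app.sizeOf_spec]
  have := List.sizeOf_lt_of_mem s.2
  omega

/-- The image of a rule under a tree homomorphism. -/
def homRule {α : Type u} (h : α → Term α) (ρ : ERule α) : ERule α :=
  ⟨applyHom h ρ.lhs, applyHom h ρ.rhs,
    ρ.conds.map (fun c => (applyHom h c.1, applyHom h c.2))⟩

/-- The image of an eCTRS under a tree homomorphism. -/
def homSys {α : Type u} (h : α → Term α) (R : Set (ERule α)) : Set (ERule α) :=
  homRule h '' R

/-- `h` determines a tree homomorphism from `T(G₁,V)` to `T(G₂,V)` (w.r.t. arity `ar`):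
for `f ∈ G₁` of arity `n`, `h f` is a term over `G₂` with variables among `x₁, …, x_n`. -/
def TreeHom {α : Type u} (ar : α → ℕ) (G₁ G₂ : Set α) (h : α → Term α) : Prop :=
  ∀ f ∈ G₁, (h f).overSig G₂ ∧ ∀ x ∈ (h f).varList, x < ar f

/-- `F`-identical tree homomorphism. -/
def FIdentical {α : Type u} (ar : α → ℕ) (F : Set α) (h : α → Term α) : Prop :=
  ∀ f ∈ F, h f = Term.app f ((List.range (ar f)).map Term.var)

/-- Non-erasing tree homomorphism (on the signature `G`). -/
def HomNonErasing {α : Type u} (ar : α → ℕ) (G : Set α) (h : α → Term α) : Prop :=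
  ∀ f ∈ G, (h f).varFinset = Finset.range (ar f)

/-- The homomorphism is EV-preserving for the eTRS `S`. -/
def EVPreserving {α : Type u} (h : α → Term α) (S : Set (ERule α)) : Prop :=
  ∀ ρ ∈ S, (homRule h ρ).extraVars = ρ.extraVars

/-! ## Unravelings for join and normal CTRSs, and `Norm` -/

/-- Marchiori-style unraveling `U_J` of a join conditional rule. -/
def unravelJ {α : Type u} (uj : ERule α → α) (ρ : ERule α) : List (ERule α) :=
  if ρ.conds.isEmpty then [ρ]
  else
    [ ⟨ρ.lhs,
        Term.app (uj ρ) ((ρ.conds.foldr (fun c acc => c.1 :: c.2 :: acc) []) ++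
          (seqOf ρ.lhs.varFinset).map Term.var), []⟩,
      ⟨Term.app (uj ρ)
          (((List.range ρ.conds.length).foldr
              (fun j acc => Term.var (ρ.freshBase + j) :: Term.var (ρ.freshBase + j) :: acc) []) ++
            (seqOf ρ.lhs.varFinset).map Term.var),
        ρ.rhs, []⟩ ]

def UJSys {α : Type u} (uj : ERule α → α) (R : Set (ERule α)) : Set (ERule α) :=
  { q | ∃ ρ ∈ R, q ∈ unravelJ uj ρ }

/-- Unraveling `U_N` of a normal conditional rule. -/
def unravelN {α : Type u} (un : ERule α → α) (ρ : ERule α) : List (ERule α) :=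
  if ρ.conds.isEmpty then [ρ]
  else
    [ ⟨ρ.lhs,
        Term.app (un ρ) (ρ.conds.map Prod.fst ++ (seqOf ρ.lhs.varFinset).map Term.var), []⟩,
      ⟨Term.app (un ρ) (ρ.conds.map Prod.snd ++ (seqOf ρ.lhs.varFinset).map Term.var),
        ρ.rhs, []⟩ ]

def UNSys {α : Type u} (un : ERule α → α) (R : Set (ERule α)) : Set (ERule α) :=
  { q | ∃ ρ ∈ R, q ∈ unravelN un ρ }

/-- `Norm` on rules: `l → r ⇐ eq(s₁,t₁) ↠ eq(⊤,⊤); …; eq(s_k,t_k) ↠ eq(⊤,⊤)`. -/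
def normRule {α : Type u} (eqS topS : α) (ρ : ERule α) : ERule α :=
  ⟨ρ.lhs, ρ.rhs,
    ρ.conds.map (fun c =>
      (Term.app eqS [c.1, c.2], Term.app eqS [Term.app topS [], Term.app topS []]))⟩

/-- `Norm(R) = {eq(x,x) → eq(⊤,⊤)} ∪ {Norm(ρ) | ρ ∈ R}`. -/
def NormSys {α : Type u} (eqS topS : α) (R : Set (ERule α)) : Set (ERule α) :=
  insert
    ⟨Term.app eqS [Term.var 0, Term.var 0],
      Term.app eqS [Term.app topS [], Term.app topS []], []⟩
    (normRule eqS topS '' R)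

/-- A normal CTRS: a deterministic, non-LV CTRS all of whose condition right-hand
sides are ground normal forms w.r.t. `R_u`. -/
def NormalCTRS {α : Type u} (R : Set (ERule α)) : Prop :=
  ∀ ρ ∈ R, ρ.Det ∧ ρ.nonLV ∧ ∀ c ∈ ρ.conds, c.2.Ground ∧ IsNF (Ru R) c.2

/-!
Read the sequence backwards, keeping track of a prefix-closed set `N` of positions of the current
term whose labels the remaining steps depend on: the redex patterns and all of `t`. Any term that
agrees with the current one on `N` admits the same steps, the redexes being matched thanks to
left-linearity. No step rewrites at or below a position with no based position at or below it (an
inert one), so a label of `N` at an inert position is either inspected by a non-root symbol of a left-hand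
side or survives into `t`; in both cases it is a symbol of `F`. Instances of extra variables sit at
inert positions, hence pruning them to their `F`-part (`Term.prune`) keeps the agreement on `N`,
and the resulting sequence is EV-instantiated on `T(F,V)`.
-/

namespace Term

variable {α : Type u}

@[elab_as_elim]
theorem ind {motive : Term α → Prop} (var : ∀ x, motive (.var x))
    (app : ∀ f ts, (∀ τ ∈ ts, motive τ) → motive (.app f ts)) : ∀ t, motive t
  | .var x => var x
  | .app f ts => app f ts fun τ _ => ind var app τ
decreasing_by
  simp only [Term.app.sizeOf_spec]
  have := List.sizeOf_lt_of_mem ‹τ ∈ ts›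
  omega

@[simp] theorem subst_var (σ : ℕ → Term α) (x : ℕ) : (var x).subst σ = σ x := by
  simp [subst]

@[simp] theorem subst_app (σ : ℕ → Term α) (f : α) (ts : List (Term α)) :
    (app f ts).subst σ = app f (ts.map (subst σ)) := by
  simp [subst, List.attach_map_val (f := subst σ)]

@[simp] theorem varList_var (x : ℕ) : (var x : Term α).varList = [x] := by simp [varList]

@[simp] theorem varList_app (f : α) (ts : List (Term α)) :
    (app f ts).varList = ts.flatMap varList := by
  simp [varList, List.flatMap_def, List.attach_map_val (f := varList)]

@[simp] theorem overSig_var (F : Set α) (x : ℕ) : (var x : Term α).overSig F := by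
  simp [overSig, apps]

@[simp] theorem overSig_app {F : Set α} {f : α} {ts : List (Term α)} :
    (app f ts).overSig F ↔ f ∈ F ∧ ∀ τ ∈ ts, τ.overSig F := by
  simp only [overSig, apps]
  simp [List.attach_map_val (f := apps)]
  grind

@[simp] theorem sub?_nil (t : Term α) : sub? [] t = some t := rfl

@[simp] theorem sub?_cons_var (i : ℕ) (q : Pos) (x : ℕ) : sub? (i :: q) (var x : Term α) = none :=
  rfl

@[simp] theorem sub?_cons_app (i : ℕ) (q : Pos) (f : α) (ts : List (Term α)) :
    sub? (i :: q) (app f ts) = ts[i]?.bind (sub? q) := rfl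

theorem sub?_append (p q : Pos) (t : Term α) : sub? (p ++ q) t = (sub? p t).bind (sub? q) := by
  induction p generalizing t with
  | nil => simp
  | cons i p ih => cases t <;> simp [ih, Option.bind_assoc]

theorem sub?_append_of_sub? {p q : Pos} {t w : Term α} (h : sub? p t = some w) :
    sub? (p ++ q) t = sub? q w := by
  rw [sub?_append, h, Option.bind_some]

theorem mem_varList_iff {t : Term α} {x : ℕ} : x ∈ t.varList ↔ ∃ q, sub? q t = some (var x) := by
  induction t using ind with
  | var y =>
    refine ⟨fun h => ⟨[], by simp_all⟩, fun ⟨q, hq⟩ => ?_⟩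
    cases q <;> simp_all
  | app f ts ih =>
    simp only [varList_app, List.mem_flatMap]
    constructor
    · rintro ⟨τ, hτ, hx⟩
      obtain ⟨q, hq⟩ := (ih τ hτ).1 hx
      obtain ⟨i, hi⟩ := List.mem_iff_getElem?.1 hτ
      exact ⟨i :: q, by simp [hi, hq]⟩
    · rintro ⟨_ | ⟨i, q⟩, hq⟩
      · simp at hq
      · obtain ⟨τ, hτ, hsub⟩ := Option.bind_eq_some_iff.1 hq
        exact ⟨τ, List.mem_of_getElem? hτ, (ih τ (List.mem_of_getElem? hτ)).2 ⟨q, hsub⟩⟩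

theorem sub?_subst {q : Pos} {t w : Term α} (σ : ℕ → Term α) (h : sub? q t = some w) :
    sub? q (t.subst σ) = some (w.subst σ) := by
  induction q generalizing t with
  | nil => simp_all
  | cons i q ih =>
    cases t with
    | var x => simp at h
    | app f ts =>
      obtain ⟨τ, hτ, hsub⟩ := Option.bind_eq_some_iff.1 h
      simpa [hτ] using ih hsub

theorem sub?_subst_append_of_var {e₀ e : Pos} {t : Term α} {x : ℕ} (σ : ℕ → Term α)
    (h : sub? e₀ t = some (var x)) : sub? (e₀ ++ e) (t.subst σ) = sub? e (σ x) :=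
  sub?_append_of_sub? (by simpa using sub?_subst σ h)

theorem subst_congr {t : Term α} {σ σ' : ℕ → Term α} (h : ∀ x ∈ t.varList, σ x = σ' x) :
    t.subst σ = t.subst σ' := by
  induction t using ind with
  | var x => simpa using h x
  | app f ts ih =>
    simp only [subst_app, app.injEq, true_and]
    exact List.map_congr_left fun τ hτ =>
      ih τ hτ fun x hx => h x (by simpa using ⟨τ, hτ, hx⟩)

@[simp] theorem replaceAt_nil (w t : Term α) : replaceAt w [] t = w := rfl

@[simp] theorem replaceAt_cons_app (w : Term α) (i : ℕ) (q : Pos) (f : α) (ts : List (Term α)) :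
    replaceAt w (i :: q) (app f ts) =
      app f (ts.mapIdx fun j τ => if j = i then replaceAt w q τ else τ) := rfl

theorem sub?_replaceAt_append {p : Pos} {s v : Term α} (w : Term α) (e : Pos)
    (h : sub? p s = some v) : sub? (p ++ e) (replaceAt w p s) = sub? e w := by
  induction p generalizing s with
  | nil => simp
  | cons i p ih =>
    cases s with
    | var x => simp at h
    | app f ts =>
      obtain ⟨τ, hτ, hsub⟩ := Option.bind_eq_some_iff.1 h
      simpa [List.getElem?_mapIdx, hτ] using ih hsub

def head : Term α → ℕ ⊕ α × ℕ
  | var x => .inl x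
  | app f ts => .inr (f, ts.length)

def headAt (q : Pos) (t : Term α) : Option (ℕ ⊕ α × ℕ) := (sub? q t).map head

theorem headAt_append_of_sub? {p q : Pos} {t w : Term α} (h : sub? p t = some w) :
    headAt (p ++ q) t = headAt q w := by
  rw [headAt, sub?_append_of_sub? h, headAt]

theorem headAt_subst_append_of_var {e₀ e : Pos} {t : Term α} {x : ℕ} (σ : ℕ → Term α)
    (h : sub? e₀ t = some (var x)) : headAt (e₀ ++ e) (t.subst σ) = headAt e (σ x) := by
  rw [headAt, sub?_subst_append_of_var σ h, headAt]

theorem headAt_replaceAt_append {p : Pos} {s v : Term α} (w : Term α) (e : Pos)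
    (h : sub? p s = some v) : headAt (p ++ e) (replaceAt w p s) = headAt e w := by
  rw [headAt, sub?_replaceAt_append w e h, headAt]

theorem headAt_replaceAt_of_not_prefix {p q : Pos} (w s : Term α) (h : ¬ p <+: q) :
    headAt q (replaceAt w p s) = headAt q s := by
  induction p generalizing q s with
  | nil => exact absurd List.nil_prefix h
  | cons i p ih =>
    rcases s with x | ⟨f, ts⟩
    · rfl
    rcases q with _ | ⟨j, q⟩
    · simp [headAt, head]
    simp only [headAt, replaceAt_cons_app, sub?_cons_app, List.getElem?_mapIdx] at ih ⊢
    rcases ts[j]? with _ | τ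
    · rfl
    by_cases hji : j = i
    · subst hji
      simpa using ih τ fun hp => h (List.cons_prefix_cons.2 ⟨rfl, hp⟩)
    · simp [hji]

theorem headAt_subst_congr {e : Pos} {t : Term α} {σ σ' : ℕ → Term α}
    (h : ∀ e₀ x e', e = e₀ ++ e' → sub? e₀ t = some (var x) →
      headAt e' (σ x) = headAt e' (σ' x)) :
    headAt e (t.subst σ) = headAt e (t.subst σ') := by
  rcases t with x | ⟨f, ts⟩
  · simpa using h [] x e rfl rfl
  rcases e with _ | ⟨i, e⟩
  · simp [headAt, head]
  simp only [headAt, subst_app, sub?_cons_app, List.getElem?_map] at h ⊢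
  rcases hτ : ts[i]? with _ | τ
  · rfl
  exact headAt_subst_congr fun e₀ x e' he hsub =>
    h (i :: e₀) x e' (by rw [he, List.cons_append]) (by simp [hτ, hsub])

theorem ext_headAt {s t : Term α} (h : ∀ q, headAt q s = headAt q t) : s = t := by
  induction s using ind generalizing t with
  | var x =>
    rcases t with y | ⟨g, us⟩ <;> simpa [headAt, head] using h []
  | app f ts ih =>
    rcases t with y | ⟨g, us⟩
    · simpa [headAt, head] using h []
    obtain ⟨rfl, hlen⟩ : f = g ∧ ts.length = us.length := by simpa [headAt, head] using h []
    refine congrArg _ (List.ext_getElem hlen fun i hi hi' => ih _ (List.getElem_mem hi) fun q => ?_)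
    simpa [headAt, hi, hi'] using h (i :: q)

theorem mem_posF_of_prefix {t w : Term α} {q u : Pos} (h : sub? q t = some w) (hu : u <+: q)
    (hne : u ≠ q) : u ∈ PosF t := by
  obtain ⟨_ | ⟨i, rest⟩, rfl⟩ := hu
  · simp at hne
  rw [sub?_append] at h
  rcases hv : sub? u t with _ | _ | ⟨f, ts⟩ <;> simp_all [PosF]

theorem eq_of_sub?_var_of_prefix {t w : Term α} {e₀ e : Pos} {x : ℕ}
    (h₀ : sub? e₀ t = some (var x)) (he : e₀ <+: e) (h : sub? e t = some w) :
    e = e₀ ∧ w = var x := by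
  obtain ⟨_ | ⟨i, rest⟩, rfl⟩ := he
  · simp_all
  · simp [sub?_append_of_sub? h₀] at h

theorem linear_app_iff {f : α} {ts : List (Term α)} :
    (app f ts).Linear ↔
      (∀ τ ∈ ts, τ.Linear) ∧ ts.Pairwise fun τ τ' => τ.varList.Disjoint τ'.varList := by
  simp only [Linear, varList_app, List.nodup_flatMap]

theorem Linear.eq_of_sub?_eq_var {t : Term α} (ht : t.Linear) {q₁ q₂ : Pos} {x : ℕ}
    (h₁ : sub? q₁ t = some (var x)) (h₂ : sub? q₂ t = some (var x)) : q₁ = q₂ := by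
  induction t using ind generalizing q₁ q₂ with
  | var y => rcases q₁ with _ | _ <;> rcases q₂ with _ | _ <;> simp_all
  | app f ts ih =>
    obtain ⟨hlin, hdisj⟩ := linear_app_iff.1 ht
    rcases q₁ with _ | ⟨i, q₁⟩ <;> rcases q₂ with _ | ⟨j, q₂⟩ <;> try simp at h₁ h₂
    obtain ⟨a, ha, ha'⟩ := Option.bind_eq_some_iff.1 h₁
    obtain ⟨b, hb, hb'⟩ := Option.bind_eq_some_iff.1 h₂
    obtain ⟨hi, rfl⟩ := List.getElem?_eq_some_iff.1 ha
    obtain ⟨hj, rfl⟩ := List.getElem?_eq_some_iff.1 hb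
    obtain rfl : i = j := by
      by_contra hij
      have hxa := mem_varList_iff.2 ⟨q₁, ha'⟩
      have hxb := mem_varList_iff.2 ⟨q₂, hb'⟩
      rcases Nat.lt_or_gt_of_ne hij with hlt | hlt
      · exact List.pairwise_iff_getElem.1 hdisj i j hi hj hlt hxa hxb
      · exact List.pairwise_iff_getElem.1 hdisj j i hj hi hlt hxb hxa
    rw [ih _ (List.getElem_mem hi) (hlin _ (List.getElem_mem hi)) ha' hb']

theorem exists_map_subst_eq {ts ws : List (Term α)}
    (hts : ts.Pairwise fun τ τ' => τ.varList.Disjoint τ'.varList)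
    (h : List.Forall₂ (fun τ w => ∃ σ, w = τ.subst σ) ts ws) : ∃ σ, ws = ts.map (subst σ) := by
  induction h with
  | nil => exact ⟨var, rfl⟩
  | @cons τ w ts ws hτ _ ih =>
    obtain ⟨σ₁, rfl⟩ := hτ
    obtain ⟨hdisj, hts⟩ := List.pairwise_cons.1 hts
    obtain ⟨σ₂, rfl⟩ := ih hts
    classical
    refine ⟨fun x => if x ∈ τ.varList then σ₁ x else σ₂ x, ?_⟩
    simp only [List.map_cons, List.cons.injEq]
    refine ⟨subst_congr fun x hx => (if_pos hx).symm, List.map_congr_left fun τ' hτ' => ?_⟩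
    exact subst_congr fun x hx => (if_neg fun hx' => hdisj τ' hτ' hx' hx).symm

theorem Linear.exists_eq_subst {l : Term α} (hl : l.Linear) {w : Term α}
    (h : ∀ q f ts, sub? q l = some (app f ts) → headAt q w = some (.inr (f, ts.length))) :
    ∃ σ, w = l.subst σ := by
  induction l using ind generalizing w with
  | var x => exact ⟨fun _ => w, by simp⟩
  | app f ts ih =>
    obtain ⟨hlin, hdisj⟩ := linear_app_iff.1 hl
    rcases w with y | ⟨g, ws⟩
    · simpa [headAt, head] using h [] f ts rfl
    obtain ⟨rfl, hlen⟩ : g = f ∧ ws.length = ts.length := by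
      simpa [headAt, head] using h [] f ts rfl
    have hchildren : List.Forall₂ (fun τ w => ∃ σ, w = τ.subst σ) ts ws :=
      List.forall₂_iff_get.2 ⟨hlen.symm, fun i hi hi' =>
        ih _ (List.getElem_mem hi) (hlin _ (List.getElem_mem hi)) fun q g us hq => by
          simpa [headAt, hi, hi'] using h (i :: q) g us (by simpa [hi] using hq)⟩
    obtain ⟨σ, hσ⟩ := exists_map_subst_eq hdisj hchildren
    exact ⟨σ, by rw [hσ, subst_app]⟩

open Classical in
noncomputable def prune (F : Set α) : Term α → Term α
  | var x => var x
  | app f ts => if f ∈ F then app f (ts.attach.map fun τ => prune F τ.1) else var 0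
decreasing_by
  simp only [Term.app.sizeOf_spec]
  have := List.sizeOf_lt_of_mem τ.2
  omega

theorem prune_app_of_mem {F : Set α} {f : α} (ts : List (Term α)) (hf : f ∈ F) :
    prune F (app f ts) = app f (ts.map (prune F)) := by
  simp [prune, hf, List.attach_map_val (f := prune F)]

theorem overSig_prune (F : Set α) (t : Term α) : (prune F t).overSig F := by
  induction t using ind with
  | var x => simp [prune]
  | app f ts ih =>
    by_cases hf : f ∈ F
    · simpa [prune_app_of_mem ts hf, hf] using ih
    · simp [prune, hf]

theorem headAt_prune {F : Set α} {q : Pos} {t : Term α}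
    (h : ∀ q', q' <+: q → ∀ f n, headAt q' t = some (.inr (f, n)) → f ∈ F) :
    headAt q (prune F t) = headAt q t := by
  rcases t with x | ⟨f, ts⟩
  · simp [prune]
  have hf : f ∈ F := h [] List.nil_prefix f ts.length rfl
  rw [prune_app_of_mem ts hf]
  rcases q with _ | ⟨i, q⟩
  · simp [headAt, head]
  simp only [headAt, sub?_cons_app, List.getElem?_map] at h ⊢
  rcases hτ : ts[i]? with _ | τ
  · rfl
  refine headAt_prune fun q' hq' g n hg => h (i :: q') (List.cons_prefix_cons.2 ⟨rfl, hq'⟩) g n ?_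
  rw [sub?_cons_app, hτ]
  exact hg

theorem overSig.mem_of_headAt_eq_inr {F : Set α} {t : Term α} (ht : t.overSig F) {q : Pos} {f : α}
    {n : ℕ} (h : headAt q t = some (.inr (f, n))) : f ∈ F := by
  rcases t with x | ⟨g, ts⟩ <;> rcases q with _ | ⟨i, q⟩
  · simp [headAt, head] at h
  · simp [headAt] at h
  · simp only [headAt, sub?_nil, Option.map_some, head, Option.some.injEq] at h
    cases h
    exact (overSig_app.1 ht).1
  · simp only [headAt, sub?_cons_app] at h
    obtain ⟨τ, hτ, hsub⟩ : ∃ τ, ts[i]? = some τ ∧ headAt q τ = some (.inr (f, n)) := by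
      cases hτ : ts[i]? <;> simp_all [headAt]
    exact overSig.mem_of_headAt_eq_inr ((overSig_app.1 ht).2 τ (List.mem_of_getElem? hτ)) hsub

theorem mem_of_headAt_eq_inr_of_args {F : Set α} {t : Term α} (ht : ∀ τ ∈ t.args, τ.overSig F)
    {q : Pos} (hq : q ≠ []) {f : α} {n : ℕ} (h : headAt q t = some (.inr (f, n))) : f ∈ F := by
  rcases t with x | ⟨g, ts⟩ <;> rcases q with _ | ⟨i, q⟩
  · exact absurd rfl hq
  · simp [headAt] at h
  · exact absurd rfl hq
  · simp only [headAt, sub?_cons_app] at h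
    obtain ⟨τ, hτ, hsub⟩ : ∃ τ, ts[i]? = some τ ∧ headAt q τ = some (.inr (f, n)) := by
      cases hτ : ts[i]? <;> simp_all [headAt]
    exact overSig.mem_of_headAt_eq_inr (ht τ (List.mem_of_getElem? hτ)) hsub

end Term

section BasedPositions

variable {α : Type u}

open Term

def PrefixClosed (N : Set Pos) : Prop := ∀ ⦃q₁ q₂ : Pos⦄, q₁ <+: q₂ → q₂ ∈ N → q₁ ∈ N

def Inert (B : Set Pos) (q : Pos) : Prop := ∀ b ∈ B, ¬ q <+: b

theorem List.IsPrefix.prefix_or_eq_append {q p u : Pos} (h : q <+: p ++ u) :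
    q <+: p ∨ ∃ u', q = p ++ u' ∧ u' <+: u := by
  rcases List.prefix_or_prefix_of_prefix h (List.prefix_append p u) with h' | ⟨u', rfl⟩
  · exact Or.inl h'
  · exact Or.inr ⟨u', rfl, (List.prefix_append_right_inj p).1 h⟩

theorem mem_nextB_cases {B : Set Pos} {p : Pos} {l r : Term α} {b : Pos}
    (hb : b ∈ nextB B p l r) :
    (b ∈ B ∧ ¬ p <+: b) ∨ (∃ q ∈ PosF r, b = p ++ q) ∨
      ∃ pv p' q x, sub? pv l = some (var x) ∧ sub? p' r = some (var x) ∧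
        p ++ pv ++ q ∈ B ∧ b = p ++ p' ++ q := by
  rcases hb with (h | h) | ⟨pv, p', q, ⟨x, hx⟩, heq, hB, rfl⟩
  · exact Or.inl h
  · exact Or.inr (Or.inl h)
  · exact Or.inr (Or.inr ⟨pv, p', q, x, hx, heq ▸ hx, hB, rfl⟩)

theorem Inert.nextB_of_not_prefix {B : Set Pos} {p q : Pos} {l r : Term α} (hq : Inert B q)
    (hpq : ¬ p <+: q) (hpB : p ∈ B) : Inert (nextB B p l r) q := by
  intro b hb hqb
  have hcross : ∀ u, q <+: p ++ u → False := fun u h => by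
    rcases h.prefix_or_eq_append with h | ⟨u', rfl, -⟩
    · exact hq p hpB h
    · exact hpq (List.prefix_append p u')
  rcases mem_nextB_cases hb with ⟨hbB, -⟩ | ⟨q', -, rfl⟩ | ⟨pv, p', q'', x, -, -, -, rfl⟩
  · exact hq b hbB hqb
  · exact hcross q' hqb
  · exact hcross (p' ++ q'') (by rwa [← List.append_assoc])

theorem Inert.nextB_append_of_var {B : Set Pos} {p e₀ e : Pos} {l r : Term α} {x : ℕ}
    (he₀ : sub? e₀ r = some (var x))
    (hl : ∀ qx, sub? qx l = some (var x) → Inert B (p ++ (qx ++ e))) :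
    Inert (nextB B p l r) (p ++ (e₀ ++ e)) := by
  intro b hb hqb
  rcases mem_nextB_cases hb with ⟨-, hpb⟩ | ⟨q', ⟨f, ts, hq'⟩, rfl⟩ |
    ⟨pv, p', q, z, hpv, hp', hB, rfl⟩
  · exact hpb ((List.prefix_append p (e₀ ++ e)).trans hqb)
  · have he₀q' := (List.prefix_append e₀ e).trans ((List.prefix_append_right_inj p).1 hqb)
    cases (eq_of_sub?_var_of_prefix he₀ he₀q' hq').2
  · rw [List.append_assoc, List.prefix_append_right_inj] at hqb
    obtain ⟨rfl, rfl⟩ : p' = e₀ ∧ z = x := by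
      rcases List.prefix_or_prefix_of_prefix ((List.prefix_append e₀ e).trans hqb)
        (List.prefix_append p' q) with h | h
      · simpa using eq_of_sub?_var_of_prefix he₀ h hp'
      · obtain ⟨rfl, hx⟩ := eq_of_sub?_var_of_prefix hp' h he₀
        simpa using hx.symm
    refine hl pv hpv _ hB ?_
    rw [List.append_assoc, List.prefix_append_right_inj, List.prefix_append_right_inj]
    exact (List.prefix_append_right_inj p').1 hqb

end BasedPositions

section Simulation

variable {α : Type u}

open Term

/-- For a step `s → s[rσ]_p` with rule `l → r`: the positions of `s` whose labels determine the
labels of `s[rσ]_p` on `N`, together with the positions of the redex pattern `l`. -/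
def pullbackPositions (N : Set Pos) (p : Pos) (l r : Term α) : Set Pos :=
  {q | (q ∈ N ∧ ¬ p <+: q) ∨ q <+: p ∨ (∃ q₀ ∈ PosF l, q = p ++ q₀) ∨
    ∃ x qx e₀ e, sub? qx l = some (var x) ∧ sub? e₀ r = some (var x) ∧
      p ++ (e₀ ++ e) ∈ N ∧ q = p ++ (qx ++ e)}

def SoundOn (F : Set α) (B N : Set Pos) (s : Term α) : Prop :=
  ∀ q ∈ N, Inert B q → ∀ f n, headAt q s = some (.inr (f, n)) → f ∈ F

def AgreeOn (N : Set Pos) (s s' : Term α) : Prop := ∀ q ∈ N, headAt q s' = headAt q s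

theorem PrefixClosed.pullbackPositions {N : Set Pos} (hN : PrefixClosed N) (p : Pos)
    (l r : Term α) :
    PrefixClosed (pullbackPositions N p l r) := by
  rintro q₁ q₂ hpre
    (⟨hq₂N, hq₂p⟩ | hq₂p | ⟨q₀, ⟨f, ts, hq₀⟩, rfl⟩ | ⟨x, qx, e₀, e, hqx, he₀, hmem, rfl⟩)
  · exact Or.inl ⟨hN hpre hq₂N, fun hc => hq₂p (hc.trans hpre)⟩
  · exact Or.inr (Or.inl (hpre.trans hq₂p))
  · rcases hpre.prefix_or_eq_append with h | ⟨u, rfl, hu⟩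
    · exact Or.inr (Or.inl h)
    · refine Or.inr (Or.inr (Or.inl ⟨u, ?_, rfl⟩))
      obtain rfl | hne := eq_or_ne u q₀
      exacts [⟨f, ts, hq₀⟩, mem_posF_of_prefix hq₀ hu hne]
  · rcases hpre.prefix_or_eq_append with h | ⟨u, rfl, hu⟩
    · exact Or.inr (Or.inl h)
    by_cases hux : u <+: qx ∧ u ≠ qx
    · exact Or.inr (Or.inr (Or.inl ⟨u, mem_posF_of_prefix hqx hux.1 hux.2, rfl⟩))
    obtain ⟨e', rfl⟩ : qx <+: u := by
      rcases List.prefix_or_prefix_of_prefix hu (List.prefix_append qx e) with h | h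
      · exact (not_and_not_right.1 hux h) ▸ List.prefix_refl qx
      · exact h
    refine Or.inr (Or.inr (Or.inr ⟨x, qx, e₀, e', hqx, he₀, hN ?_ hmem, rfl⟩))
    rw [List.prefix_append_right_inj, List.prefix_append_right_inj]
    exact (List.prefix_append_right_inj qx).1 hu

theorem SoundOn.pullbackPositions {F : Set α} {B N : Set Pos} {p : Pos} {l r s : Term α}
    {σ : ℕ → Term α} (hN : SoundOn F (nextB B p l r) N (replaceAt (r.subst σ) p s))
    (hl : l.Linear) (hargs : ∀ τ ∈ l.args, τ.overSig F) (hpB : p ∈ B)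
    (hsub : sub? p s = some (l.subst σ)) : SoundOn F B (pullbackPositions N p l r) s := by
  rintro q (⟨hqN, hpq⟩ | hqp | ⟨q₀, ⟨g, ts, hq₀⟩, rfl⟩ | ⟨x, qx, e₀, e, hqx, he₀, hmem, rfl⟩)
    hq f n hf
  · refine hN q hqN (hq.nextB_of_not_prefix hpq hpB) f n ?_
    rwa [headAt_replaceAt_of_not_prefix _ _ hpq]
  · exact absurd hqp (hq p hpB)
  · have hq₀ne : q₀ ≠ [] := by
      rintro rfl
      exact hq p hpB (by simp)
    rw [headAt_append_of_sub? hsub, headAt, sub?_subst σ hq₀] at hf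
    obtain ⟨rfl, -⟩ : g = f ∧ _ := by simpa [head] using hf
    exact mem_of_headAt_eq_inr_of_args hargs hq₀ne (n := ts.length) (by simp [headAt, hq₀, head])
  · refine hN _ hmem (Inert.nextB_append_of_var he₀ fun qx' hqx' => ?_) f n ?_
    · rwa [hl.eq_of_sub?_eq_var hqx' hqx]
    · rwa [headAt_replaceAt_append _ _ hsub, headAt_subst_append_of_var σ he₀,
        ← headAt_subst_append_of_var σ hqx, ← headAt_append_of_sub? hsub]

theorem AgreeOn.replaceAt {N : Set Pos} {p : Pos} {s s' t t' v v' : Term α}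
    (hsub : sub? p s = some v) (hsub' : sub? p s' = some v')
    (hout : ∀ q ∈ N, ¬ p <+: q → headAt q s' = headAt q s)
    (hin : ∀ e, p ++ e ∈ N → headAt e t' = headAt e t) :
    AgreeOn N (replaceAt t p s) (replaceAt t' p s') := by
  intro q hq
  by_cases hpq : p <+: q
  · obtain ⟨e, rfl⟩ := hpq
    rw [headAt_replaceAt_append _ _ hsub', headAt_replaceAt_append _ _ hsub]
    exact hin e hq
  · rw [headAt_replaceAt_of_not_prefix _ _ hpq, headAt_replaceAt_of_not_prefix _ _ hpq]
    exact hout q hq hpq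

theorem exists_step_of_agreeOn_pullbackPositions {F : Set α} {B N : Set Pos} {p : Pos}
    {l r s s' : Term α} {σ : ℕ → Term α} (hl : l.Linear) (hNc : PrefixClosed N)
    (hN : SoundOn F (nextB B p l r) N (replaceAt (r.subst σ) p s))
    (hsub : sub? p s = some (l.subst σ)) (hs' : AgreeOn (pullbackPositions N p l r) s s') :
    ∃ σ', sub? p s' = some (l.subst σ') ∧ (∀ x ∉ l.varList, (σ' x).overSig F) ∧
      AgreeOn N (replaceAt (r.subst σ) p s) (replaceAt (r.subst σ') p s') := by
  have hp := hs' p (Or.inr (Or.inl (List.prefix_refl p)))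
  rw [headAt, headAt, hsub] at hp
  obtain ⟨w, hw, -⟩ := Option.map_eq_some_iff.1 hp
  obtain ⟨σ₀, rfl⟩ := hl.exists_eq_subst (w := w) fun q f ts hq => by
    rw [← headAt_append_of_sub? hw, hs' _ (Or.inr (Or.inr (Or.inl ⟨q, ⟨f, ts, hq⟩, rfl⟩))),
      headAt_append_of_sub? hsub]
    simp [headAt, sub?_subst σ hq, head]
  classical
  let σ' x := if x ∈ l.varList then σ₀ x else prune F (σ x)
  have hsub' : sub? p s' = some (l.subst σ') := by
    rw [hw, subst_congr fun x hx => if_pos hx]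
  refine ⟨σ', hsub', fun x hx => by simp [σ', hx, overSig_prune], ?_⟩
  refine AgreeOn.replaceAt hsub hsub' (fun q hq hpq => hs' q (Or.inl ⟨hq, hpq⟩))
    fun e he => headAt_subst_congr fun e₀ x e' he₀e hx => ?_
  subst he₀e
  by_cases hxl : x ∈ l.varList
  · obtain ⟨qx, hqx⟩ := mem_varList_iff.1 hxl
    simp only [σ', if_pos hxl]
    calc headAt e' (σ₀ x) = headAt (p ++ (qx ++ e')) s' := by
          rw [headAt_append_of_sub? hw, headAt_subst_append_of_var σ₀ hqx]
      _ = headAt (p ++ (qx ++ e')) s :=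
          hs' _ (Or.inr (Or.inr (Or.inr ⟨x, qx, e₀, e', hqx, hx, he, rfl⟩)))
      _ = headAt e' (σ x) := by rw [headAt_append_of_sub? hsub, headAt_subst_append_of_var σ hqx]
  · simp only [σ', if_neg hxl]
    refine headAt_prune fun e'' he'' f n hf => hN (p ++ (e₀ ++ e'')) (hNc ?_ he)
      (Inert.nextB_append_of_var hx fun qx hqx => absurd (mem_varList_iff.2 ⟨qx, hqx⟩) hxl) f n ?_
    · rw [List.prefix_append_right_inj, List.prefix_append_right_inj]
      exact he''
    · rwa [headAt_replaceAt_append _ _ hsub, headAt_subst_append_of_var σ hx]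

theorem EVSeq.exists_instantiated_of_agreeOn {F : Set α} {S : Set (ERule α)} (hLL : ∀ ρ ∈ S, ρ.LL)
    (hargs : ∀ ρ ∈ S, ∀ τ ∈ ρ.lhs.args, τ.overSig F) {B : Set Pos} {s t : Term α}
    (h : EVSeq S (fun _ => True) B s t) (ht : t.overSig F) :
    ∃ N, PrefixClosed N ∧ SoundOn F B N s ∧
      ∀ s', AgreeOn N s s' → EVSeq S (·.overSig F) B s' t := by
  induction h with
  | refl B t =>
    refine ⟨Set.univ, fun _ _ _ _ => trivial, fun q _ _ f n hf => ht.mem_of_headAt_eq_inr hf,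
      fun s' hs' => ?_⟩
    rw [ext_headAt fun q => hs' q trivial]
    exact .refl _ _
  | step p ρ σ hρ hconds hsub hs₁ hpB _ _ ih =>
    subst hs₁
    obtain ⟨N, hNc, hN, hsim⟩ := ih ht
    refine ⟨pullbackPositions N p ρ.lhs ρ.rhs, hNc.pullbackPositions _ _ _,
      hN.pullbackPositions (hLL ρ hρ) (hargs ρ hρ) hpB hsub, fun s' hs' => ?_⟩
    obtain ⟨σ', hsub', hextra, hagree⟩ :=
      exists_step_of_agreeOn_pullbackPositions (hLL ρ hρ) hNc hN hsub hs'
    refine .step p ρ σ' hρ hconds hsub' rfl hpB (fun x hx => hextra x ?_) (hsim _ hagree)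
    simpa [ERule.extraVars, varFinset] using (Finset.mem_sdiff.1 hx).2

end Simulation

theorem ERule.overSig.args_lhs_of_mem_unravelWith {α : Type u} {F : Set α} {ρ : ERule α}
    (hρ : ρ.overSig F) {carry : ℕ → List ℕ} {u : ℕ → α} {ρ' : ERule α}
    (h : ρ' ∈ unravelWith carry u ρ) : ∀ τ ∈ ρ'.lhs.args, τ.overSig F := by
  obtain ⟨j, hj, rfl⟩ := List.mem_map.1 h
  by_cases hj0 : j = 0
  · rcases hl : ρ.lhs with x | ⟨f, ts⟩
    · simp [hj0, Term.args]
    · simpa [hj0, hl, Term.args] using (Term.overSig_app.1 (hl ▸ hρ.1)).2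
  · have hjc : j - 1 < ρ.conds.length := by simp at hj; omega
    simp only [hj0, if_false, mkU, Term.args, List.mem_cons, List.mem_map]
    rintro τ (rfl | ⟨x, -, rfl⟩)
    · simpa [List.getD_eq_getElem?_getD, hjc] using (hρ.2.2 _ (List.getElem_mem hjc)).2
    · exact Term.overSig_var F x

theorem uopt_LL_EVsafe_EVinstantiated_general {α : Type u} (F : Set α) (R : Set (ERule α))
    (u : ERule α → ℕ → α)
    (hsig : ∀ ρ ∈ R, ρ.overSig F)
    (hLL : ∀ ρ ∈ R, ∀ q ∈ unravelOpt (u ρ) ρ, q.LL)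
    (s t : Term α) (ht : t.overSig F)
    (h : EVSafe (UoptSys u R) s t) :
    EVSafeI (UoptSys u R) (fun w => w.overSig F) s t := by
  have hLL' : ∀ ρ' ∈ UoptSys u R, ρ'.LL := by
    rintro ρ' ⟨ρ, hρ, hρ'⟩
    exact hLL ρ hρ ρ' hρ'
  have hargs : ∀ ρ' ∈ UoptSys u R, ∀ τ ∈ ρ'.lhs.args, τ.overSig F := by
    rintro ρ' ⟨ρ, hρ, hρ'⟩
    exact (hsig ρ hρ).args_lhs_of_mem_unravelWith hρ'
  obtain ⟨N, -, -, hsim⟩ := EVSeq.exists_instantiated_of_agreeOn hLL' hargs h ht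
  exact hsim s fun _ _ => rfl

/-- Let `R` be a `U_opt`-LL eDCTRS over a signature `F`, and let
`s, t ∈ T(F,V)`. If there is an EV-safe reduction sequence `s ↪*_{U_opt(R)} t`,
then there is an EV-safe reduction sequence `s ↪*_{U_opt(R)} t` that is
EV-instantiated on `T(F,V)`. -/
theorem uopt_LL_EVsafe_EVinstantiated {α : Type u} (F : Set α) (R : Set (ERule α))
    (u : ERule α → ℕ → α)
    (hsig : ∀ ρ ∈ R, ρ.overSig F)
    (hdet : ∀ ρ ∈ R, ρ.Det)
    (hLL : ∀ ρ ∈ R, ∀ q ∈ unravelOpt (u ρ) ρ, q.LL)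
    (hfresh : UFresh F u R)
    (s t : Term α) (hs : s.overSig F) (ht : t.overSig F)
    (h : EVSafe (UoptSys u R) s t) :
    EVSafeI (UoptSys u R) (fun w => w.overSig F) s t :=
  uopt_LL_EVsafe_EVinstantiated_general F R u hsig hLL s t ht h
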